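/- arXiv:1307.1106 — 2 statements merged into one kernel-verified Lean document; each statement's English description precedes it below -/
import Mathlib

section
/- Let F: ℝ × [0,1] → ℝ × [0,1] be a lift of an annulus homeomorphism commuting with the unit translation T(θ,J) = (θ+1,J). If M ⊆ ℝ × [0,1] is a monotone invariant set (i.e., π_θ(z₁) < π_θ(z₂) implies π_θ(F(z₁)) < π_θ(F(z₂)) for z₁,z₂ ∈ M, and M is invariant under F and T), then for every z ∈ M the rotation number ρ(z) = lim_{n→∞} (π_θ(Fⁿ(z)) − π_θ(z))/n exists, and all points of M have the same rotation number. -/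
/-!
Comparing a point of `M` with integer translates of another one and using monotonicity shows
that after `n` steps the displacements of any two points of `M` differ by less than `1`.
Applied to `z` and `Fᵐ z`, this makes the displacement of a single orbit quasi-additive, so by
Fekete's lemma its average converges; the same bound carries that limit over to all of `M`.
-/

open Filter Function Set Topology

theorem exists_tendsto_div_of_abs_sub_add_le {u : ℕ → ℝ} {C : ℝ}
    (hu : ∀ m n, |u (m + n) - u m - u n| ≤ C) :
    ∃ ρ, Tendsto (fun n => u n / n) atTop (𝓝 ρ) := by
  have hsub : Subadditive (fun n => u n + C) := fun m n => by
    have := (abs_le.1 (hu m n)).2; linarith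
  have hlower : ∀ n : ℕ, u 0 + n * (u 1 - C) ≤ u n := by
    intro n
    induction n with
    | zero => simp
    | succ n ih => have := (abs_le.1 (hu n 1)).1; push_cast; linarith
  have hbdd : BddBelow (range fun n => (u n + C) / n) := by
    refine ⟨min 0 (u 1 - C), forall_mem_range.2 fun n => ?_⟩
    rcases Nat.eq_zero_or_pos n with rfl | hn
    · simp
    · have hu0 : -C ≤ u 0 := by linarith [(abs_le.1 (hu 0 0)).2]
      have hn' : (1 : ℝ) ≤ n := by exact_mod_cast hn
      rw [le_div_iff₀ (by linarith)]
      nlinarith [min_le_left 0 (u 1 - C), min_le_right 0 (u 1 - C), hlower n]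
  refine ⟨hsub.lim, ?_⟩
  have h := (hsub.tendsto_lim hbdd).sub (tendsto_const_div_atTop_nhds_zero_nat C)
  rw [sub_zero] at h
  exact h.congr fun n => by ring

theorem Filter.Tendsto.div_natCast_of_abs_sub_le {a b : ℕ → ℝ} {C ρ : ℝ}
    (hab : ∀ n, |a n - b n| ≤ C) (hb : Tendsto (fun n => b n / n) atTop (𝓝 ρ)) :
    Tendsto (fun n => a n / n) atTop (𝓝 ρ) := by
  have hdiff : Tendsto (fun n => (a n - b n) / n) atTop (𝓝 0) := by
    refine squeeze_zero_norm' ?_ (tendsto_const_div_atTop_nhds_zero_nat C)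
    filter_upwards with n
    rw [Real.norm_eq_abs, abs_div, Nat.abs_cast]
    exact div_le_div_of_nonneg_right (hab n) n.cast_nonneg
  simpa [sub_div] using hb.add hdiff

def shift (t : ℝ) (z : ℝ × ℝ) : ℝ × ℝ := (z.1 + t, z.2)

theorem shift_one_iterate (k : ℕ) : (shift 1)^[k] = shift k := by
  induction k with
  | zero => ext z <;> simp [shift]
  | succ k ih =>
    ext z
    · rw [iterate_succ', comp_apply, ih]; simp only [shift]; push_cast; ring
    · rw [iterate_succ', comp_apply, ih]; rfl

def displacement (f : ℝ × ℝ → ℝ × ℝ) (n : ℕ) (z : ℝ × ℝ) : ℝ := (f^[n] z).1 - z.1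

theorem displacement_add (f : ℝ × ℝ → ℝ × ℝ) (m n : ℕ) (z : ℝ × ℝ) :
    displacement f (m + n) z = displacement f m (f^[n] z) + displacement f n z := by
  simp only [displacement, iterate_add_apply]; ring

structure IsMonotoneInvariant (f : ℝ × ℝ → ℝ × ℝ) (M : Set (ℝ × ℝ)) : Prop where
  mapsTo : MapsTo f M M
  mapsTo_shift : MapsTo (shift 1) M M
  fst_lt : ∀ z₁ ∈ M, ∀ z₂ ∈ M, z₁.1 < z₂.1 → (f z₁).1 < (f z₂).1

namespace IsMonotoneInvariant

variable {f : ℝ × ℝ → ℝ × ℝ} {M : Set (ℝ × ℝ)}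

theorem mapsTo_shift_natCast (hM : IsMonotoneInvariant f M) (k : ℕ) : MapsTo (shift k) M M :=
  shift_one_iterate k ▸ hM.mapsTo_shift.iterate k

theorem fst_iterate_lt (hM : IsMonotoneInvariant f M) (n : ℕ) {z₁ z₂ : ℝ × ℝ}
    (h₁ : z₁ ∈ M) (h₂ : z₂ ∈ M) (h : z₁.1 < z₂.1) : (f^[n] z₁).1 < (f^[n] z₂).1 := by
  induction n generalizing z₁ z₂ with
  | zero => exact h
  | succ n ih =>
    exact ih (hM.mapsTo h₁) (hM.mapsTo h₂) (hM.fst_lt z₁ h₁ z₂ h₂ h)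

theorem fst_iterate_add_lt (hM : IsMonotoneInvariant f M)
    (hcomm : Function.Commute f (shift 1)) (n : ℕ) {z w : ℝ × ℝ} (hz : z ∈ M) (hw : w ∈ M)
    {a b : ℕ} (h : w.1 + a < z.1 + b) :
    (f^[n] w).1 + a < (f^[n] z).1 + b := by
  have hshift (k : ℕ) (x : ℝ × ℝ) : f^[n] (shift k x) = shift k (f^[n] x) := by
    rw [← shift_one_iterate]; exact (hcomm.iterate_iterate n k) x
  have := hM.fst_iterate_lt n (hM.mapsTo_shift_natCast a hw) (hM.mapsTo_shift_natCast b hz) h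
  rwa [hshift, hshift] at this

theorem displacement_lt_add_one (hM : IsMonotoneInvariant f M)
    (hcomm : Function.Commute f (shift 1)) (n : ℕ) {z w : ℝ × ℝ} (hz : z ∈ M) (hw : w ∈ M) :
    displacement f n w < displacement f n z + 1 := by
  -- `z.1 + k ∈ (w.1, w.1 + 1]`; `k` is split into naturals since `M` is only forward-invariant
  set k : ℤ := ⌊w.1 - z.1⌋ + 1
  have hk : ((k.toNat : ℕ) : ℝ) - ((-k).toNat : ℕ) = k := by
    exact_mod_cast Int.toNat_sub_toNat_neg k
  have hlt : w.1 - z.1 < k := by push_cast [k]; exact Int.lt_floor_add_one _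
  have hle : (k : ℝ) - 1 ≤ w.1 - z.1 := by push_cast [k]; simpa using Int.floor_le (w.1 - z.1)
  have := hM.fst_iterate_add_lt hcomm n hz hw (a := (-k).toNat) (b := k.toNat) (by linarith)
  simp only [displacement]
  linarith

theorem abs_displacement_sub_le (hM : IsMonotoneInvariant f M)
    (hcomm : Function.Commute f (shift 1)) (n : ℕ) {z w : ℝ × ℝ} (hz : z ∈ M) (hw : w ∈ M) :
    |displacement f n w - displacement f n z| ≤ 1 :=
  (abs_sub_lt_iff.2 ⟨by linarith [hM.displacement_lt_add_one hcomm n hz hw],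
    by linarith [hM.displacement_lt_add_one hcomm n hw hz]⟩).le

theorem exists_tendsto_displacement_div (hM : IsMonotoneInvariant f M)
    (hcomm : Function.Commute f (shift 1)) :
    ∃ ρ : ℝ, ∀ z ∈ M, Tendsto (fun n : ℕ => displacement f n z / n) atTop (𝓝 ρ) := by
  rcases M.eq_empty_or_nonempty with rfl | ⟨z₀, hz₀⟩
  · exact ⟨0, by simp⟩
  have hquasi (m n : ℕ) :
      |displacement f (m + n) z₀ - displacement f m z₀ - displacement f n z₀| ≤ 1 := by
    rw [displacement_add, add_sub_right_comm, add_sub_cancel_right]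
    exact hM.abs_displacement_sub_le hcomm m hz₀ (hM.mapsTo.iterate n hz₀)
  obtain ⟨ρ, hρ⟩ := exists_tendsto_div_of_abs_sub_add_le (u := (displacement f · z₀)) hquasi
  exact ⟨ρ, fun z hz => hρ.div_natCast_of_abs_sub_le (hM.abs_displacement_sub_le hcomm · hz₀ hz)⟩

end IsMonotoneInvariant

theorem stmt11 (F : (ℝ × ℝ) ≃ₜ (ℝ × ℝ))
    (hcomm : ∀ z : ℝ × ℝ, F (z.1 + 1, z.2) = ((F z).1 + 1, (F z).2))
    (M : Set (ℝ × ℝ))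
    (hFinv : ∀ z ∈ M, F z ∈ M)
    (hTinv : ∀ z ∈ M, ((z.1 + 1, z.2) : ℝ × ℝ) ∈ M)
    (hmono : ∀ z₁ ∈ M, ∀ z₂ ∈ M, z₁.1 < z₂.1 → (F z₁).1 < (F z₂).1) :
    ∃ ρ : ℝ, ∀ z ∈ M,
      Filter.Tendsto (fun n : ℕ => (((⇑F)^[n] z).1 - z.1) / n)
        Filter.atTop (nhds ρ) :=
  IsMonotoneInvariant.exists_tendsto_displacement_div
    ⟨fun z hz => hFinv z hz, fun z hz => hTinv z hz, hmono⟩ hcomm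
end

section
/- Let Φ: [0,T] → Sp(1) be a continuous arc of 2×2 symplectic matrices with Φ(0) = Id. For z ∈ ℂ∖{0}, write Φ(t)z = r(t)e^{2πiθ(t)} with θ continuous, and set Δ(z) = θ(T) − θ(0). Then the winding interval I(Φ) = {Δ(z) : z ∈ ℂ∖{0}} is an interval of length strictly less than 1/2; consequently I(Φ) either contains exactly one integer or lies strictly between two consecutive integers. -/
/-!
The matrix `Φ t` multiplies the cross product `z × w` by `det (Φ t) ≠ 0`, so `Φ t z` and `Φ t w`
are parallel for all `t` or for no `t`. Hence `2 (θ z - θ w)` is either an integer for all `t`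
or never an integer; in both cases it moves by less than `1`, because a
continuous function avoiding the integers (or the half-integers) stays between two consecutive ones.
-/

open Matrix Set Real

theorem IsPreconnected.floor_eq_floor_of_forall_intCast_notMem {s : Set ℝ} (hs : IsPreconnected s)
    (hs_int : ∀ n : ℤ, (n : ℝ) ∉ s) {x y : ℝ} (hx : x ∈ s) (hy : y ∈ s) : ⌊x⌋ = ⌊y⌋ := by
  suffices h : ∀ x ∈ s, ∀ y ∈ s, ⌊x⌋ ≤ ⌊y⌋ from le_antisymm (h x hx y hy) (h y hy x hx)
  intro x hx y hy
  by_contra! hlt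
  exact hs_int ⌊x⌋ (hs.Icc_subset hy hx ⟨(Int.floor_lt.mp hlt).le, Int.floor_le x⟩)

theorem abs_sub_lt_one_of_forall_ne_intCast {f : ℝ → ℝ} {a b : ℝ} (hab : a ≤ b)
    (hf : ContinuousOn f (Icc a b)) (hf_int : ∀ t ∈ Icc a b, ∀ n : ℤ, f t ≠ n) :
    |f b - f a| < 1 := by
  refine Int.abs_sub_lt_one_of_floor_eq_floor <|
    (isPreconnected_Icc.image f hf).floor_eq_floor_of_forall_intCast_notMem ?_
      (mem_image_of_mem f (right_mem_Icc.2 hab)) (mem_image_of_mem f (left_mem_Icc.2 hab))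
  rintro n ⟨t, ht, hfn⟩
  exact hf_int t ht n hfn

theorem abs_sub_lt_half_of_forall_sin_eq_zero_or_forall_sin_ne_zero {g : ℝ → ℝ} {a b : ℝ}
    (hab : a ≤ b) (hg : ContinuousOn g (Icc a b))
    (hsin : (∀ t ∈ Icc a b, sin (2 * π * g t) = 0) ∨ (∀ t ∈ Icc a b, sin (2 * π * g t) ≠ 0)) :
    |g b - g a| < 1 / 2 := by
  suffices ∃ c : ℝ, ∀ t ∈ Icc a b, ∀ n : ℤ, 2 * g t + c ≠ n by
    obtain ⟨c, hc⟩ := this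
    have h := abs_sub_lt_one_of_forall_ne_intCast (f := fun t => 2 * g t + c) hab
      ((continuousOn_const.mul hg).add continuousOn_const) hc
    rw [show 2 * g b + c - (2 * g a + c) = 2 * (g b - g a) by ring, abs_mul, abs_two] at h
    linarith
  rcases hsin with hzero | hne
  · refine ⟨1 / 2, fun t ht n hn => ?_⟩
    obtain ⟨m, hm⟩ := sin_eq_zero_iff.1 (hzero t ht)
    have h2g : 2 * g t = m := by
      have hπ := pi_ne_zero
      field_simp at hm ⊢
      linarith
    have hodd : ((2 * (n - m) : ℤ) : ℝ) = (1 : ℤ) := by push_cast; linarith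
    have := Int.cast_injective hodd
    omega
  · refine ⟨0, fun t ht n hn => hne t ht ?_⟩
    rw [show 2 * π * g t = n * π by rw [← hn]; ring]
    exact sin_int_mul_pi n

theorem Matrix.det_ne_zero_of_transpose_mul_mul_self_eq {n R : Type*} [Fintype n] [DecidableEq n]
    [CommRing R] {A J : Matrix n n R} (hJ : J.det ≠ 0) (hA : Aᵀ * J * A = J) : A.det ≠ 0 := by
  intro hdet
  apply hJ
  rw [← hA, det_mul, det_mul, det_transpose, hdet, zero_mul, zero_mul]

theorem Matrix.mulVec_cross_fin_two {R : Type*} [CommRing R] (A : Matrix (Fin 2) (Fin 2) R)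
    (v w : Fin 2 → R) :
    (A *ᵥ v) 0 * (A *ᵥ w) 1 - (A *ᵥ v) 1 * (A *ᵥ w) 0 = A.det * (v 0 * w 1 - v 1 * w 0) := by
  simp only [mulVec, dotProduct, Fin.sum_univ_two, det_fin_two]
  ring

theorem mul_sin_sub_eq_det_mul_cross {A : Matrix (Fin 2) (Fin 2) ℝ} {v w : Fin 2 → ℝ}
    {r s α β : ℝ} (hv : A *ᵥ v = r • ![cos α, sin α]) (hw : A *ᵥ w = s • ![cos β, sin β]) :
    r * s * sin (β - α) = A.det * (v 0 * w 1 - v 1 * w 0) := by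
  rw [← A.mulVec_cross_fin_two, hv, hw, sin_sub]
  simp only [Pi.smul_apply, smul_eq_mul, cons_val_zero, cons_val_one]
  ring

theorem sin_sub_eq_zero_iff_cross_eq_zero {A : Matrix (Fin 2) (Fin 2) ℝ} (hA : A.det ≠ 0)
    {v w : Fin 2 → ℝ} {r s α β : ℝ} (hr : 0 < r) (hs : 0 < s)
    (hv : A *ᵥ v = r • ![cos α, sin α]) (hw : A *ᵥ w = s • ![cos β, sin β]) :
    sin (β - α) = 0 ↔ v 0 * w 1 - v 1 * w 0 = 0 := by
  rw [← mul_eq_zero_iff_left (mul_pos hr hs).ne', mul_sin_sub_eq_det_mul_cross hv hw,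
    mul_eq_zero, or_iff_right hA]

theorem stmt12_general (T : ℝ) (hT : 0 < T)
    (Φ : ℝ → Matrix (Fin 2) (Fin 2) ℝ)
    (hsymp : ∀ t ∈ Set.Icc 0 T,
      (Φ t).transpose * !![(0 : ℝ), 1; -1, 0] * Φ t = !![(0 : ℝ), 1; -1, 0])
    (θ r : ℝ × ℝ → ℝ → ℝ)
    (harg : ∀ z : ℝ × ℝ, z ≠ 0 →
      ContinuousOn (θ z) (Set.Icc 0 T) ∧
      ∀ t ∈ Set.Icc 0 T, 0 < r z t ∧
        Φ t *ᵥ ![z.1, z.2] =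
          r z t • ![Real.cos (2 * Real.pi * θ z t), Real.sin (2 * Real.pi * θ z t)]) :
    (∀ z w : ℝ × ℝ, z ≠ 0 → w ≠ 0 →
      |(θ z T - θ z 0) - (θ w T - θ w 0)| < 1 / 2) ∧
    (∀ m n : ℤ, (∃ z : ℝ × ℝ, z ≠ 0 ∧ θ z T - θ z 0 = (m : ℝ)) →
      (∃ w : ℝ × ℝ, w ≠ 0 ∧ θ w T - θ w 0 = (n : ℝ)) → m = n) := by
  have hwinding : ∀ z w : ℝ × ℝ, z ≠ 0 → w ≠ 0 →
      |(θ z T - θ z 0) - (θ w T - θ w 0)| < 1 / 2 := by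
    intro z w hz hw
    obtain ⟨hθz, hpolar_z⟩ := harg z hz
    obtain ⟨hθw, hpolar_w⟩ := harg w hw
    have hsin_iff : ∀ t ∈ Icc 0 T,
        sin (2 * π * (θ z t - θ w t)) = 0 ↔ w.1 * z.2 - w.2 * z.1 = 0 := by
      intro t ht
      obtain ⟨hrz, hz_t⟩ := hpolar_z t ht
      obtain ⟨hrw, hw_t⟩ := hpolar_w t ht
      have hdet : (Φ t).det ≠ 0 :=
        det_ne_zero_of_transpose_mul_mul_self_eq (by simp [det_fin_two_of]) (hsymp t ht)
      simpa only [mul_sub, cons_val_zero, cons_val_one] using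
        sin_sub_eq_zero_iff_cross_eq_zero hdet hrw hrz hw_t hz_t
    have hdichotomy := abs_sub_lt_half_of_forall_sin_eq_zero_or_forall_sin_ne_zero hT.le
      (hθz.sub hθw) <| (em (w.1 * z.2 - w.2 * z.1 = 0)).imp
        (fun hc t ht => (hsin_iff t ht).2 hc) (fun hc t ht => mt (hsin_iff t ht).1 hc)
    simpa only [Pi.sub_apply, sub_sub_sub_comm] using hdichotomy
  refine ⟨hwinding, ?_⟩
  rintro m n ⟨z, hz, hΔz⟩ ⟨w, hw, hΔw⟩
  have hmn : |((m - n : ℤ) : ℝ)| < 1 / 2 := by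
    simpa only [hΔz, hΔw, Int.cast_sub] using hwinding z w hz hw
  have : |m - n| < 1 := by
    rw [← Int.cast_lt (R := ℝ), Int.cast_abs, Int.cast_one]
    linarith
  exact sub_eq_zero.mp (Int.abs_lt_one_iff.mp this)

theorem stmt12 (T : ℝ) (hT : 0 < T)
    (Φ : ℝ → Matrix (Fin 2) (Fin 2) ℝ)
    (hcont : ContinuousOn Φ (Set.Icc 0 T))
    (h0 : Φ 0 = 1)
    (hsymp : ∀ t ∈ Set.Icc 0 T,
      (Φ t).transpose * !![(0 : ℝ), 1; -1, 0] * Φ t = !![(0 : ℝ), 1; -1, 0])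
    (θ r : ℝ × ℝ → ℝ → ℝ)
    (harg : ∀ z : ℝ × ℝ, z ≠ 0 →
      ContinuousOn (θ z) (Set.Icc 0 T) ∧
      ∀ t ∈ Set.Icc 0 T, 0 < r z t ∧
        Φ t *ᵥ ![z.1, z.2] =
          r z t • ![Real.cos (2 * Real.pi * θ z t), Real.sin (2 * Real.pi * θ z t)]) :
    (∀ z w : ℝ × ℝ, z ≠ 0 → w ≠ 0 →
      |(θ z T - θ z 0) - (θ w T - θ w 0)| < 1 / 2) ∧
    (∀ m n : ℤ, (∃ z : ℝ × ℝ, z ≠ 0 ∧ θ z T - θ z 0 = (m : ℝ)) →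
      (∃ w : ℝ × ℝ, w ≠ 0 ∧ θ w T - θ w 0 = (n : ℝ)) → m = n) :=
  stmt12_general T hT Φ hsymp θ r harg
end
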